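/- arXiv:2101.12572 — 5 statements merged into one kernel-verified Lean document; each statement's English description precedes it below -/
import Mathlib

section
/- The submodule N = 4ℤ × {0} of the ℤ₂-graded ℤ-module M = ℤ × ℤ (with M₀ = ℤ × {0}, M₁ = {0} × ℤ, and R = ℤ graded trivially with R₀ = ℤ, R₁ = {0}) is a graded quasi-semiprime submodule of M but not a graded semiprime submodule of M. -/
/-!
The colon ideal `(N :_ℤ M)` is `4ℤ ∩ 0 = 0`, because the second factor `ℤ` of `M` is faithful,
and `0` is a semiprime ideal of the reduced ring `ℤ`. On the other hand `2² • (1, 0) = (4, 0)`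
lies in `N` while `2 • (1, 0) = (2, 0)` does not.
-/

namespace Submodule

variable {R M₁ M₂ : Type*} [CommRing R] [AddCommGroup M₁] [AddCommGroup M₂] [Module R M₁]
  [Module R M₂]

lemma colon_univ_prod (p : Submodule R M₁) (q : Submodule R M₂) :
    (p.prod q).colon Set.univ = p.colon Set.univ ⊓ q.colon Set.univ := by
  ext r
  simp only [Ideal.mem_inf, mem_colon, Set.mem_univ, true_implies, Prod.forall, mem_prod,
    Prod.smul_fst, Prod.smul_snd]
  exact ⟨fun h => ⟨fun x => (h x 0).1, fun y => (h 0 y).2⟩, fun h x y => ⟨h.1 x, h.2 y⟩⟩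

lemma mk_fst_zero_mem_prod {p : Submodule R M₁} {q : Submodule R M₂} {m : M₁ × M₂}
    (hm : m ∈ p.prod q) : (m.1, (0 : M₂)) ∈ p.prod q :=
  ⟨hm.1, q.zero_mem⟩

lemma mk_zero_snd_mem_prod {p : Submodule R M₁} {q : Submodule R M₂} {m : M₁ × M₂}
    (hm : m ∈ p.prod q) : ((0 : M₁), m.2) ∈ p.prod q :=
  ⟨p.zero_mem, hm.2⟩

end Submodule

lemma mul_eq_zero_of_pow_mul_eq_zero {R : Type*} [CommMonoidWithZero R] [IsReduced R]
    {r s : R} {n : ℕ} (h : r ^ n * s = 0) : r * s = 0 :=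
  IsReduced.eq_zero _ ⟨n + 1, by rw [mul_pow, pow_succ, pow_succ', mul_mul_mul_comm, h, zero_mul]⟩

/-- The submodule `N = 4ℤ × {0}` of the `ℤ₂`-graded `ℤ`-module `M = ℤ × ℤ`
(with `M₀ = ℤ × {0}`, `M₁ = {0} × ℤ`, and `R = ℤ` trivially graded so that every
element of `ℤ` is homogeneous) is a proper graded submodule whose colon ideal
`(N :_ℤ M)` is a graded semiprime ideal (so `N` is graded quasi-semiprime), but
`N` is not a graded semiprime submodule. -/
theorem stmt1 :
    ∀ N : Submodule ℤ (ℤ × ℤ), N = Submodule.prod (Ideal.span {(4 : ℤ)} : Submodule ℤ ℤ) (⊥ : Submodule ℤ ℤ) →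
    ∀ hM : Set (ℤ × ℤ), hM = {m : ℤ × ℤ | m.2 = 0 ∨ m.1 = 0} →
      -- N is a proper graded submodule (closed under homogeneous components)
      (N ≠ ⊤) ∧
      (∀ m ∈ N, ((m.1, (0 : ℤ)) ∈ N ∧ ((0 : ℤ), m.2) ∈ N)) ∧
      -- (N :_ℤ M) is a graded semiprime ideal of ℤ (every element of ℤ is homogeneous)
      (N.colon ⊤ ≠ ⊤ ∧
        ∀ r s : ℤ, ∀ n : ℕ, 0 < n → r ^ n * s ∈ N.colon ⊤ → r * s ∈ N.colon ⊤) ∧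
      -- but N is not a graded semiprime submodule of M
      ¬ (∀ r : ℤ, ∀ m ∈ hM, ∀ n : ℕ, 0 < n → r ^ n • m ∈ N → r • m ∈ N) := by
  rintro N rfl hM rfl
  have hcolon : (Submodule.prod (Ideal.span {(4 : ℤ)} : Submodule ℤ ℤ)
      (⊥ : Submodule ℤ ℤ)).colon ⊤ = ⊥ := by
    rw [Set.top_eq_univ, Submodule.colon_univ_prod, Submodule.colon_univ, Submodule.colon_univ,
      inf_bot_eq]
  refine ⟨fun h => bot_ne_top ((Submodule.prod_eq_top_iff _ _ _).1 h).2,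
    fun m hm => ⟨Submodule.mk_fst_zero_mem_prod hm, Submodule.mk_zero_snd_mem_prod hm⟩,
    ⟨by rw [hcolon]; exact bot_ne_top, fun r s n _ => ?_⟩, fun h => ?_⟩
  · simpa only [hcolon, Submodule.mem_bot] using mul_eq_zero_of_pow_mul_eq_zero
  · obtain ⟨h2, -⟩ := h 2 (1, 0) (Or.inl rfl) 2 two_pos ⟨by simp, by simp⟩
    simp [Ideal.mem_span_singleton] at h2
end

section
/- Let M be a graded multiplication R-module and N a proper graded submodule of M. Then N is a graded quasi-semiprime submodule of M if and only if N is a graded semiprime submodule of M. -/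
open DirectSum

section Defs

variable {G : Type*} [AddGroup G] [DecidableEq G]
variable {R : Type*} [CommRing R] {M : Type*} [AddCommGroup M] [Module R M]

/-- An ideal is graded if it contains all homogeneous components of its elements. -/
def IsGradedIdeal (𝒜 : G → AddSubgroup R) [GradedRing 𝒜] (I : Ideal R) : Prop :=
  ∀ r ∈ I, ∀ g : G, (DirectSum.decompose 𝒜 r g : R) ∈ I

/-- A submodule is graded if it contains all homogeneous components of its elements. -/
def IsGradedSubmodule (ℳ : G → AddSubgroup M) [DirectSum.Decomposition ℳ]
    (N : Submodule R M) : Prop :=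
  ∀ m ∈ N, ∀ g : G, (DirectSum.decompose ℳ m g : M) ∈ N

/-- A graded semiprime ideal: proper, graded, and r^n*s ∈ I implies r*s ∈ I for homogeneous r,s. -/
def IsGradedSemiprimeIdeal (𝒜 : G → AddSubgroup R) [GradedRing 𝒜] (I : Ideal R) : Prop :=
  I ≠ ⊤ ∧ IsGradedIdeal 𝒜 I ∧
    ∀ r s : R, SetLike.IsHomogeneousElem 𝒜 r → SetLike.IsHomogeneousElem 𝒜 s →
      ∀ n : ℕ, 0 < n → r ^ n * s ∈ I → r * s ∈ I

/-- A graded prime ideal. -/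
def IsGradedPrimeIdeal (𝒜 : G → AddSubgroup R) [GradedRing 𝒜] (I : Ideal R) : Prop :=
  I ≠ ⊤ ∧ IsGradedIdeal 𝒜 I ∧
    ∀ r s : R, SetLike.IsHomogeneousElem 𝒜 r → SetLike.IsHomogeneousElem 𝒜 s →
      r * s ∈ I → r ∈ I ∨ s ∈ I

/-- A graded primary ideal. -/
def IsGradedPrimaryIdeal (𝒜 : G → AddSubgroup R) [GradedRing 𝒜] (I : Ideal R) : Prop :=
  I ≠ ⊤ ∧ IsGradedIdeal 𝒜 I ∧
    ∀ r s : R, SetLike.IsHomogeneousElem 𝒜 r → SetLike.IsHomogeneousElem 𝒜 s →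
      r * s ∈ I → r ∈ I ∨ ∃ n : ℕ, 0 < n ∧ s ^ n ∈ I

/-- A graded maximal ideal: proper graded ideal maximal among proper graded ideals. -/
def IsGradedMaximalIdeal (𝒜 : G → AddSubgroup R) [GradedRing 𝒜] (I : Ideal R) : Prop :=
  I ≠ ⊤ ∧ IsGradedIdeal 𝒜 I ∧
    ∀ J : Ideal R, IsGradedIdeal 𝒜 J → I ≤ J → J ≠ ⊤ → J = I

/-- A graded semiprime submodule. -/
def IsGradedSemiprimeSubmodule (𝒜 : G → AddSubgroup R) (ℳ : G → AddSubgroup M)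
    [DirectSum.Decomposition ℳ] (N : Submodule R M) : Prop :=
  N ≠ ⊤ ∧ IsGradedSubmodule ℳ N ∧
    ∀ (r : R) (m : M), SetLike.IsHomogeneousElem 𝒜 r → SetLike.IsHomogeneousElem ℳ m →
      ∀ n : ℕ, 0 < n → r ^ n • m ∈ N → r • m ∈ N

/-- A graded quasi-semiprime submodule: proper graded submodule whose colon ideal
`(N :_R M)` is a graded semiprime ideal. -/
def IsGradedQuasiSemiprimeSubmodule (𝒜 : G → AddSubgroup R) [GradedRing 𝒜]
    (ℳ : G → AddSubgroup M) [DirectSum.Decomposition ℳ] (N : Submodule R M) : Prop :=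
  N ≠ ⊤ ∧ IsGradedSubmodule ℳ N ∧ IsGradedSemiprimeIdeal 𝒜 (N.colon ⊤)

/-- A graded multiplication module: every graded submodule N equals (N :_R M)M. -/
def IsGradedMultiplicationModule (𝒜 : G → AddSubgroup R) [GradedRing 𝒜]
    (ℳ : G → AddSubgroup M) [DirectSum.Decomposition ℳ] : Prop :=
  ∀ N : Submodule R M, IsGradedSubmodule ℳ N → N = (N.colon ⊤) • (⊤ : Submodule R M)

end Defs

/-! Both directions come down to testing membership in `(N :_R M)` on homogeneous elements,
which works because a homogeneous component of `s • x`, for `x` homogeneous, is a homogeneous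
component of `s` times `x`. For the harder direction take `m` homogeneous with `rⁿm ∈ N` and
`J = (Rm :_R M)`: then `rⁿJ ⊆ (N :_R M)`, and since `J` is graded, semiprimeness of
`(N :_R M)` applied to the homogeneous components of `J` gives `rJ ⊆ (N :_R M)`. As `M` is a
multiplication module, `m ∈ JM`, hence `rm ∈ (rJ)M ⊆ N`. -/

namespace DirectSum

theorem coe_decompose_smul_add_of_right_mem {ι σA σM A M : Type*} [DecidableEq ι]
    [AddRightCancelMonoid ι] [Semiring A] [AddCommMonoid M] [Module A M] [SetLike σA A]
    [AddSubmonoidClass σA A] [SetLike σM M] [AddSubmonoidClass σM M] (𝒜 : ι → σA)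
    (ℳ : ι → σM) [Decomposition 𝒜] [Decomposition ℳ] [SetLike.GradedSMul 𝒜 ℳ]
    {i j : ι} (a : A) {x : M} (hx : x ∈ ℳ j) :
    (decompose ℳ (a • x) (i + j) : M) = (decompose 𝒜 a i : A) • x := by
  induction a using Decomposition.inductionOn 𝒜 with
  | zero => simp
  | @homogeneous k a =>
    have hax : (a : A) • x ∈ ℳ (k + j) := SetLike.GradedSMul.smul_mem a.2 hx
    by_cases hki : k = i
    · subst hki
      rw [decompose_of_mem_same ℳ hax, decompose_coe, of_eq_same]
    · rw [decompose_of_mem_ne ℳ hax (fun h => hki (add_right_cancel h)), decompose_coe,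
        of_eq_of_ne _ _ _ (Ne.symm hki), ZeroMemClass.coe_zero, zero_smul]
  | add a b ha hb => simp only [add_smul, decompose_add, add_apply, AddMemClass.coe_add, ha, hb]

end DirectSum

namespace Submodule

variable {R M : Type*} [Semiring R] [AddCommMonoid M] [Module R M]

theorem mul_mem_colon {N P : Submodule R M} {S : Set M} {a b : R} (ha : a ∈ N.colon P)
    (hb : b ∈ P.colon S) : a * b ∈ N.colon S :=
  mem_colon.mpr fun s hs => (mul_smul a b s).symm ▸ mem_colon.mp ha _ (mem_colon.mp hb s hs)

theorem smul_mem_of_forall_mul_mem_colon {N : Submodule R M} {J : Ideal R} {r : R}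
    (h : ∀ j ∈ J, r * j ∈ N.colon ⊤) {m : M} (hm : m ∈ J • (⊤ : Submodule R M)) : r • m ∈ N := by
  refine smul_induction_on hm (fun j hj x _ => ?_) fun x y hx hy => ?_
  · exact (mul_smul r j x) ▸ mem_colon.mp (h j hj) x trivial
  · simpa only [smul_add] using N.add_mem hx hy

theorem mem_colon_top_of_forall_isHomogeneousElem {ι σ : Type*} [DecidableEq ι] [SetLike σ M]
    [AddSubmonoidClass σ M] (ℳ : ι → σ) [DirectSum.Decomposition ℳ] {N : Submodule R M} {a : R}
    (h : ∀ m, SetLike.IsHomogeneousElem ℳ m → a • m ∈ N) : a ∈ N.colon ⊤ := by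
  suffices ∀ x, a • x ∈ N from mem_colon.mpr fun x _ => this x
  intro x
  induction x using DirectSum.Decomposition.inductionOn ℳ with
  | zero => simp
  | @homogeneous i m => exact h m ⟨i, m.2⟩
  | add x y hx hy => simpa only [smul_add] using N.add_mem hx hy

end Submodule

section Graded

open DirectSum

variable {G : Type*} [AddGroup G] [DecidableEq G]
variable {R : Type*} [CommRing R] {M : Type*} [AddCommGroup M] [Module R M]
variable {ℳ : G → AddSubgroup M} [DirectSum.Decomposition ℳ]

theorem isGradedSubmodule_span_singleton (𝒜 : G → AddSubgroup R) [Decomposition 𝒜]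
    [SetLike.GradedSMul 𝒜 ℳ] {m : M} (hm : SetLike.IsHomogeneousElem ℳ m) :
    IsGradedSubmodule ℳ (Submodule.span R {m}) := by
  obtain ⟨h, hmh⟩ := hm
  intro x hx g
  obtain ⟨t, rfl⟩ := Submodule.mem_span_singleton.mp hx
  have := coe_decompose_smul_add_of_right_mem 𝒜 ℳ (i := g - h) t hmh
  rw [sub_add_cancel] at this
  exact this ▸ Submodule.smul_mem _ _ (Submodule.mem_span_singleton_self m)

variable (𝒜 : G → AddSubgroup R) [GradedRing 𝒜] [SetLike.GradedSMul 𝒜 ℳ]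

theorem IsGradedSubmodule.isGradedIdeal_colon_top {N : Submodule R M}
    (hN : IsGradedSubmodule ℳ N) : IsGradedIdeal 𝒜 (N.colon ⊤) := by
  intro s hs g
  refine Submodule.mem_colon_top_of_forall_isHomogeneousElem ℳ fun m ⟨h, hm⟩ => ?_
  rw [← coe_decompose_smul_add_of_right_mem 𝒜 ℳ s hm]
  exact hN _ (Submodule.mem_colon.mp hs m trivial) _

theorem IsGradedSemiprimeIdeal.mul_mem_of_forall_pow_mul_mem {P J : Ideal R}
    (hP : IsGradedSemiprimeIdeal 𝒜 P) (hJ : IsGradedIdeal 𝒜 J) {r : R}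
    (hr : SetLike.IsHomogeneousElem 𝒜 r) {n : ℕ} (hn : 0 < n) (h : ∀ j ∈ J, r ^ n * j ∈ P)
    {j : R} (hj : j ∈ J) : r * j ∈ P := by
  classical
  rw [← sum_support_decompose 𝒜 j, Finset.mul_sum]
  exact P.sum_mem fun g _ => hP.2.2 r _ hr ⟨g, SetLike.coe_mem _⟩ n hn (h _ (hJ j hj g))

theorem IsGradedSemiprimeSubmodule.isGradedSemiprimeIdeal_colon_top {N : Submodule R M}
    (hN : IsGradedSemiprimeSubmodule 𝒜 ℳ N) : IsGradedSemiprimeIdeal 𝒜 (N.colon ⊤) := by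
  obtain ⟨hNt, hNg, hsemiprime⟩ := hN
  refine ⟨fun htop => hNt ?_, hNg.isGradedIdeal_colon_top 𝒜, fun r s hr ⟨i, hs⟩ n hn hrs => ?_⟩
  · exact eq_top_iff.mpr fun x _ => (Submodule.colon_eq_top_iff_subset _).mp htop trivial
  refine Submodule.mem_colon_top_of_forall_isHomogeneousElem ℳ fun m ⟨j, hm⟩ => ?_
  have hsm : SetLike.IsHomogeneousElem ℳ (s • m) := ⟨i +ᵥ j, SetLike.GradedSMul.smul_mem hs hm⟩
  have hrsm : r ^ n • s • m ∈ N := (mul_smul (r ^ n) s m) ▸ Submodule.mem_colon.mp hrs m trivial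
  exact (mul_smul r s m).symm ▸ hsemiprime r (s • m) hr hsm n hn hrsm

theorem IsGradedQuasiSemiprimeSubmodule.isGradedSemiprimeSubmodule
    (hM : IsGradedMultiplicationModule 𝒜 ℳ) {N : Submodule R M}
    (hN : IsGradedQuasiSemiprimeSubmodule 𝒜 ℳ N) : IsGradedSemiprimeSubmodule 𝒜 ℳ N := by
  obtain ⟨hNt, hNg, hcolon⟩ := hN
  refine ⟨hNt, hNg, fun r m hr hm n hn hrm => ?_⟩
  have hRm := isGradedSubmodule_span_singleton 𝒜 hm
  have hmJ : m ∈ (Submodule.span R {m}).colon ⊤ • (⊤ : Submodule R M) :=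
    hM _ hRm ▸ Submodule.mem_span_singleton_self m
  have hrnJ : ∀ j ∈ (Submodule.span R {m}).colon ⊤, r ^ n * j ∈ N.colon ⊤ := fun j hj =>
    Submodule.mul_mem_colon (Submodule.mem_colon_span_singleton.mpr hrm) hj
  exact Submodule.smul_mem_of_forall_mul_mem_colon
    (fun j hj => hcolon.mul_mem_of_forall_pow_mul_mem 𝒜 (hRm.isGradedIdeal_colon_top 𝒜) hr hn
      hrnJ hj) hmJ

end Graded

variable {G : Type*} [AddGroup G] [DecidableEq G]
variable {R : Type*} [CommRing R] {M : Type*} [AddCommGroup M] [Module R M]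
variable (𝒜 : G → AddSubgroup R) [GradedRing 𝒜]
variable (ℳ : G → AddSubgroup M) [DirectSum.Decomposition ℳ] [SetLike.GradedSMul 𝒜 ℳ]

theorem stmt3 (hM : IsGradedMultiplicationModule 𝒜 ℳ) (N : Submodule R M) :
    IsGradedQuasiSemiprimeSubmodule 𝒜 ℳ N ↔ IsGradedSemiprimeSubmodule 𝒜 ℳ N :=
  ⟨fun hN => hN.isGradedSemiprimeSubmodule 𝒜 hM,
    fun hN => ⟨hN.1, hN.2.1, hN.isGradedSemiprimeIdeal_colon_top 𝒜⟩⟩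
end

section
/- Let N be a graded quasi-semiprime submodule of a graded R-module M. If (N :_R M) is a graded primary ideal of R, then (N :_R M) is a graded prime ideal of R. -/
open DirectSum

variable {G : Type*} [AddGroup G] [DecidableEq G]
variable {R : Type*} [CommRing R] {M : Type*} [AddCommGroup M] [Module R M]
variable (𝒜 : G → AddSubgroup R) [GradedRing 𝒜]
variable (ℳ : G → AddSubgroup M) [DirectSum.Decomposition ℳ] [SetLike.GradedSMul 𝒜 ℳ]

theorem IsGradedSemiprimeIdeal.mem_of_pow_mem {I : Ideal R} (hI : IsGradedSemiprimeIdeal 𝒜 I)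
    {s : R} (hs : SetLike.IsHomogeneousElem 𝒜 s) {n : ℕ} (hn : 0 < n) (hsn : s ^ n ∈ I) :
    s ∈ I := by
  have h := hI.2.2 s 1 hs (SetLike.isHomogeneousElem_one 𝒜) n hn (by rwa [mul_one])
  rwa [mul_one] at h

theorem IsGradedPrimaryIdeal.isGradedPrimeIdeal {I : Ideal R} (hprim : IsGradedPrimaryIdeal 𝒜 I)
    (hsemi : IsGradedSemiprimeIdeal 𝒜 I) : IsGradedPrimeIdeal 𝒜 I := by
  refine ⟨hprim.1, hprim.2.1, fun r s hr hs hrs => ?_⟩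
  obtain h | ⟨n, hn, hsn⟩ := hprim.2.2 r s hr hs hrs
  · exact Or.inl h
  · exact Or.inr (hsemi.mem_of_pow_mem 𝒜 hs hn hsn)

theorem stmt5 (N : Submodule R M) (hN : IsGradedQuasiSemiprimeSubmodule 𝒜 ℳ N)
    (hprim : IsGradedPrimaryIdeal 𝒜 (N.colon ⊤)) :
    IsGradedPrimeIdeal 𝒜 (N.colon ⊤) :=
  hprim.isGradedPrimeIdeal 𝒜 hN.2.2
end

section
/- Let f : M → M′ be a graded epimorphism of graded R-modules and N a graded quasi-semiprime submodule of M with ker(f) ⊆ N. Then f(N) is a graded quasi-semiprime submodule of M′. -/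
open DirectSum

/-! Since `ker f ≤ N`, we have `f⁻¹(f N) = N`; as `f` is onto, `r • M₂ ⊆ f N` iff `r • M ⊆ N`,
so `f N` and `N` have the same colon ideal. Properness also passes through `f⁻¹(f N) = N`, and
gradedness because a graded map commutes with taking homogeneous components. -/

theorem map_directSumDecompose_of_map_mem {ι M M₂ σ τ F : Type*} [DecidableEq ι]
    [AddCommMonoid M] [AddCommMonoid M₂] [SetLike σ M] [AddSubmonoidClass σ M]
    [SetLike τ M₂] [AddSubmonoidClass τ M₂] (ℳ : ι → σ) (ℳ₂ : ι → τ)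
    [Decomposition ℳ] [Decomposition ℳ₂] [FunLike F M M₂] [AddMonoidHomClass F M M₂]
    (f : F) (hf : ∀ i, ∀ m ∈ ℳ i, f m ∈ ℳ₂ i) (m : M) (i : ι) :
    f (decompose ℳ m i) = decompose ℳ₂ (f m) i := by
  induction m using Decomposition.inductionOn ℳ with
  | zero => simp
  | @homogeneous j x =>
    obtain ⟨x, hx⟩ := x
    by_cases hji : j = i
    · subst hji
      rw [decompose_of_mem_same ℳ hx, decompose_of_mem_same ℳ₂ (hf _ _ hx)]
    · rw [decompose_of_mem_ne ℳ hx hji, decompose_of_mem_ne ℳ₂ (hf _ _ hx) hji, map_zero]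
  | add x y hx hy =>
    simp only [map_add, decompose_add, DirectSum.add_apply, AddMemClass.coe_add, hx, hy]

theorem Submodule.comap_colon {R M M₂ : Type*} [Semiring R] [AddCommMonoid M] [Module R M]
    [AddCommMonoid M₂] [Module R M₂] (f : M →ₗ[R] M₂) (P : Submodule R M₂) (S : Set M) :
    (P.comap f).colon S = P.colon (f '' S) := by
  ext r
  simp [mem_colon]

theorem Submodule.colon_univ_map_of_surjective {R M M₂ : Type*} [Ring R] [AddCommGroup M]
    [Module R M] [AddCommGroup M₂] [Module R M₂] {f : M →ₗ[R] M₂}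
    (hf : Function.Surjective f) {N : Submodule R M} (hker : LinearMap.ker f ≤ N) :
    (N.map f).colon Set.univ = N.colon Set.univ := by
  rw [← Set.image_univ_of_surjective hf, ← comap_colon, comap_map_eq_self hker]

theorem IsGradedSubmodule.map {G R M M₂ : Type*} [AddGroup G] [DecidableEq G] [CommRing R]
    [AddCommGroup M] [Module R M] [AddCommGroup M₂] [Module R M₂]
    {ℳ : G → AddSubgroup M} {ℳ₂ : G → AddSubgroup M₂} [Decomposition ℳ] [Decomposition ℳ₂]
    {N : Submodule R M} (hN : IsGradedSubmodule ℳ N) {f : M →ₗ[R] M₂}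
    (hf : ∀ g : G, ∀ m ∈ ℳ g, f m ∈ ℳ₂ g) :
    IsGradedSubmodule ℳ₂ (N.map f) := by
  rintro _ ⟨m, hm, rfl⟩ g
  rw [← map_directSumDecompose_of_map_mem ℳ ℳ₂ f hf]
  exact Submodule.mem_map_of_mem (hN m hm g)

variable {G : Type*} [AddGroup G] [DecidableEq G]
variable {R : Type*} [CommRing R] {M : Type*} [AddCommGroup M] [Module R M]
variable (𝒜 : G → AddSubgroup R) [GradedRing 𝒜]
variable (ℳ : G → AddSubgroup M) [DirectSum.Decomposition ℳ] [SetLike.GradedSMul 𝒜 ℳ]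

variable {M₂ : Type*} [AddCommGroup M₂] [Module R M₂]
variable (ℳ₂ : G → AddSubgroup M₂) [DirectSum.Decomposition ℳ₂] [SetLike.GradedSMul 𝒜 ℳ₂]

theorem stmt7 (f : M →ₗ[R] M₂) (hgr : ∀ g : G, ∀ m ∈ ℳ g, f m ∈ ℳ₂ g)
    (hsurj : Function.Surjective f) (N : Submodule R M)
    (hN : IsGradedQuasiSemiprimeSubmodule 𝒜 ℳ N) (hker : LinearMap.ker f ≤ N) :
    IsGradedQuasiSemiprimeSubmodule 𝒜 ℳ₂ (N.map f) := by
  obtain ⟨hN_ne_top, hN_graded, hN_colon⟩ := hN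
  refine ⟨fun h_top => hN_ne_top ?_, hN_graded.map hgr, ?_⟩
  · rw [← Submodule.comap_map_eq_self hker, h_top, Submodule.comap_top]
  · rwa [Set.top_eq_univ, ← Submodule.colon_univ_map_of_surjective hsurj hker] at hN_colon
end

section
/- If M is a graded semiprime module (i.e., the zero submodule is a graded semiprime submodule of M), then M is a graded quasi-semiprime module, meaning Ann_R(N) is a graded semiprime ideal of R for every non-zero graded submodule N of M. -/
open DirectSum

/-
The annihilator of a graded submodule `N` is tested on homogeneous elements of `N`, and the
`g`-th component of `r` acts on a homogeneous `m ∈ ℳ i` as the `(g + i)`-th component of `r • m`;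
this gives gradedness. For homogeneous `r, s` and homogeneous `m ∈ N`, the element `s • m` is
homogeneous, so `r ^ n • (s • m) = 0` forces `r • (s • m) = 0` because `0` is graded semiprime.
-/

namespace DirectSum

variable {ι R M σ τ : Type*} [DecidableEq ι] [AddRightCancelMonoid ι]
  [Semiring R] [AddCommMonoid M] [Module R M]
  [SetLike σ R] [AddSubmonoidClass σ R] [SetLike τ M] [AddSubmonoidClass τ M]
  (𝒜 : ι → σ) (ℳ : ι → τ) [GradedRing 𝒜] [Decomposition ℳ] [SetLike.GradedSMul 𝒜 ℳ]

theorem coe_decompose_smul_add_of_right_mem_s11 (r : R) {m : M} {i : ι} (hm : m ∈ ℳ i) (g : ι) :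
    (decompose ℳ (r • m) (g + i) : M) = (decompose 𝒜 r g : R) • m := by
  induction r using Decomposition.inductionOn 𝒜 with
  | zero => simp
  | @homogeneous j r =>
    have hrm : (r : R) • m ∈ ℳ (j + i) := SetLike.GradedSMul.smul_mem r.2 hm
    rw [decompose_coe]
    by_cases hjg : j = g
    · subst hjg
      simp [decompose_of_mem_same ℳ hrm]
    · rw [decompose_of_mem_ne ℳ hrm (by simpa using hjg), of_eq_of_ne _ _ _ (Ne.symm hjg)]
      simp
  | add r r' hr hr' => simp [decompose_add, add_smul, hr, hr']

end DirectSum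

section Annihilator

variable {G R M : Type*} [DecidableEq G] [CommRing R] [AddCommGroup M] [Module R M]
  {ℳ : G → AddSubgroup M} [DirectSum.Decomposition ℳ]

theorem mem_annihilator_iff_of_isGradedSubmodule {N : Submodule R M}
    (hN : IsGradedSubmodule ℳ N) {r : R} :
    r ∈ N.annihilator ↔ ∀ m ∈ N, SetLike.IsHomogeneousElem ℳ m → r • m = 0 := by
  classical
  refine ⟨fun hr m hm _ ↦ Submodule.mem_annihilator.mp hr m hm, fun h ↦ ?_⟩
  refine Submodule.mem_annihilator.mpr fun m hm ↦ ?_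
  rw [← DirectSum.sum_support_decompose ℳ m, Finset.smul_sum]
  exact Finset.sum_eq_zero fun i _ ↦ h _ (hN m hm i) ⟨i, SetLike.coe_mem _⟩

end Annihilator

variable {G : Type*} [AddGroup G] [DecidableEq G]
variable {R : Type*} [CommRing R] {M : Type*} [AddCommGroup M] [Module R M]
variable (𝒜 : G → AddSubgroup R) [GradedRing 𝒜]
variable (ℳ : G → AddSubgroup M) [DirectSum.Decomposition ℳ] [SetLike.GradedSMul 𝒜 ℳ]

theorem isGradedIdeal_annihilator_of_isGradedSubmodule {N : Submodule R M}
    (hN : IsGradedSubmodule ℳ N) : IsGradedIdeal 𝒜 N.annihilator := by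
  intro r hr g
  rw [mem_annihilator_iff_of_isGradedSubmodule hN] at hr ⊢
  rintro m hm ⟨i, hmi⟩
  rw [← DirectSum.coe_decompose_smul_add_of_right_mem_s11 𝒜 ℳ r hmi, hr m hm ⟨i, hmi⟩,
    DirectSum.decompose_zero, DirectSum.zero_apply, ZeroMemClass.coe_zero]

theorem stmt11 (h : IsGradedSemiprimeSubmodule 𝒜 ℳ (⊥ : Submodule R M)) :
    ∀ N : Submodule R M, N ≠ ⊥ → IsGradedSubmodule ℳ N →
      IsGradedSemiprimeIdeal 𝒜 N.annihilator := by
  intro N hN hNg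
  refine ⟨Submodule.annihilator_eq_top_iff.not.mpr hN,
    isGradedIdeal_annihilator_of_isGradedSubmodule 𝒜 ℳ hNg, ?_⟩
  intro r s hr hs n hn hrs
  rw [mem_annihilator_iff_of_isGradedSubmodule hNg] at hrs ⊢
  intro m hm hm_hom
  have hpow : r ^ n • s • m ∈ (⊥ : Submodule R M) := by
    rw [Submodule.mem_bot, ← mul_smul]
    exact hrs m hm hm_hom
  simpa [mul_smul] using h.2.2 r (s • m) hr (hs.graded_smul hm_hom) n hn hpow
end
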